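/- Let L₁, L₂, U₁, U₂ be finite sets of rational numbers and let S = {q ∈ ℚ | (∀ a ∈ L₁, a < q) ∧ (∀ a ∈ L₂, a ≤ q) ∧ (∀ b ∈ U₁, q < b) ∧ (∀ b ∈ U₂, q ≤ b)}. If S is nonempty, then in the extended reals, ⨅ q ∈ S, (q : EReal) = ⨆ a ∈ L₁ ∪ L₂, (a : EReal), where the supremum over the empty set is −∞. -/

import Mathlib

/-!
Every feasible point lies above all lower bounds, so the infimum is at least their maximum `m`.
Conversely, for any rational `r > m`, lowering a feasible point `q₀` to `min q₀ r` keeps all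
upper bounds and now also satisfies every lower bound, so the infimum is at most `r`; rationals
are dense in the extended reals above `m`.
-/

section FeasibleSet

variable {α : Type*} [LinearOrder α]

def feasibleSet (L₁ L₂ U₁ U₂ : Set α) : Set α :=
  {q | (∀ a ∈ L₁, a < q) ∧ (∀ a ∈ L₂, a ≤ q) ∧ (∀ b ∈ U₁, q < b) ∧ (∀ b ∈ U₂, q ≤ b)}

variable {L₁ L₂ U₁ U₂ : Set α} {q r : α}

theorem le_of_mem_feasibleSet (hq : q ∈ feasibleSet L₁ L₂ U₁ U₂) :
    ∀ a ∈ L₁ ∪ L₂, a ≤ q := by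
  rintro a (ha | ha)
  exacts [(hq.1 a ha).le, hq.2.1 a ha]

theorem min_mem_feasibleSet (hq : q ∈ feasibleSet L₁ L₂ U₁ U₂) (hr : ∀ a ∈ L₁ ∪ L₂, a < r) :
    min q r ∈ feasibleSet L₁ L₂ U₁ U₂ := by
  obtain ⟨h₁, h₂, h₃, h₄⟩ := hq
  refine ⟨fun a ha => lt_min (h₁ a ha) (hr a (.inl ha)),
    fun a ha => le_min (h₂ a ha) (hr a (.inr ha)).le,
    fun b hb => (min_le_left q r).trans_lt (h₃ b hb),
    fun b hb => (min_le_left q r).trans (h₄ b hb)⟩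

end FeasibleSet

theorem EReal.iInf_ratCast_eq_iSup_ratCast {S B : Set ℚ} (hle : ∀ q ∈ S, ∀ a ∈ B, a ≤ q)
    (hex : ∀ r : ℚ, (∀ a ∈ B, a < r) → ∃ q ∈ S, q ≤ r) :
    ⨅ q ∈ S, ((q : ℝ) : EReal) = ⨆ a ∈ B, ((a : ℝ) : EReal) := by
  refine le_antisymm (le_of_forall_gt_imp_ge_of_dense fun z hz => ?_)
    (iSup₂_le fun a ha => le_iInf₂ fun q hq => by exact_mod_cast hle q hq a ha)
  obtain ⟨r, hBr, hrz⟩ := EReal.exists_rat_btwn_of_lt hz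
  have hr : ∀ a ∈ B, a < r := fun a ha => by
    exact_mod_cast (le_iSup₂ (f := fun a (_ : a ∈ B) => ((a : ℝ) : EReal)) a ha).trans_lt hBr
  obtain ⟨q, hqS, hqr⟩ := hex r hr
  calc ⨅ q ∈ S, ((q : ℝ) : EReal) ≤ ((q : ℝ) : EReal) := iInf₂_le q hqS
    _ ≤ ((r : ℝ) : EReal) := by exact_mod_cast hqr
    _ ≤ z := hrz.le

theorem inf_feasible_eq_max_lower_bounds (L₁ L₂ U₁ U₂ : Finset ℚ)
    (S : Set ℚ)
    (hS : S = {q : ℚ | (∀ a ∈ L₁, a < q) ∧ (∀ a ∈ L₂, a ≤ q) ∧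
      (∀ b ∈ U₁, q < b) ∧ (∀ b ∈ U₂, q ≤ b)})
    (hne : S.Nonempty) :
    ⨅ q ∈ S, ((q : ℝ) : EReal) = ⨆ a ∈ (L₁ ∪ L₂ : Finset ℚ), ((a : ℝ) : EReal) := by
  replace hS : S = feasibleSet (L₁ : Set ℚ) L₂ U₁ U₂ := hS
  obtain ⟨q₀, hq₀⟩ := hne
  subst hS
  have hB : ((L₁ ∪ L₂ : Finset ℚ) : Set ℚ) = ↑L₁ ∪ ↑L₂ := Finset.coe_union L₁ L₂
  refine EReal.iInf_ratCast_eq_iSup_ratCast (B := ((L₁ ∪ L₂ : Finset ℚ) : Set ℚ))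
    (fun q hq => hB ▸ le_of_mem_feasibleSet hq) (fun r hr => ?_)
  exact ⟨min q₀ r, min_mem_feasibleSet hq₀ (hB ▸ hr), min_le_right q₀ r⟩
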